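/- Let F_q be a finite field and let C be an [n,k]_q linear code with generator matrix G (a k×n matrix over F_q whose rows form a basis of C). Then there exists a permutation P of {1,...,n} such that the reduced row echelon form R of G·M_P (where M_P is the permutation matrix of P) has some row whose Hamming weight equals the minimum distance d(C) of C. -/

import Mathlib

/-- Hamming weight of a vector: the number of nonzero coordinates. -/
def hWt {F : Type*} [Zero F] [DecidableEq F] {n : ℕ} (v : Fin n → F) : ℕ :=
  (Finset.univ.filter fun i => v i ≠ 0).card

/-- `(i, j)` is a pivot position of `R`: the entry is nonzero and all entries
to its left in the same row vanish. -/
def IsPivot {F : Type*} [Zero F] {k n : ℕ} (R : Matrix (Fin k) (Fin n) F)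
    (i : Fin k) (j : Fin n) : Prop :=
  R i j ≠ 0 ∧ ∀ j' : Fin n, j' < j → R i j' = 0

/-- `R` is in reduced row echelon form. -/
def IsRREF {F : Type*} [Zero F] [One F] {k n : ℕ} (R : Matrix (Fin k) (Fin n) F) : Prop :=
  (∀ i i' : Fin k, i ≤ i' → R i = 0 → R i' = 0) ∧
  (∀ (i : Fin k) (j : Fin n), IsPivot R i j → R i j = 1) ∧
  (∀ (i i' : Fin k) (j j' : Fin n), i < i' → IsPivot R i j → IsPivot R i' j' → j < j') ∧
  (∀ (i : Fin k) (j : Fin n), IsPivot R i j → ∀ i' : Fin k, i' ≠ i → R i' j = 0)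

/-- Minimum distance of a linear code: minimal Hamming weight of a nonzero codeword. -/
noncomputable def minDist {F : Type*} [Field F] [DecidableEq F] {n : ℕ}
    (C : Submodule F (Fin n → F)) : ℕ :=
  sInf {d : ℕ | ∃ c ∈ C, c ≠ 0 ∧ hWt c = d}

/-! Let `c` be a codeword of minimum weight `d` and permute the columns so that the support of `c`
becomes the last `d` positions. In an RREF `R` of the permuted generator matrix, the pivot
coordinates of a combination of rows are its coefficients; as the permuted `c` is nonzero and
vanishes on the first `n - d` columns, some row of `R` has its pivot among the last `d` columns.
That row vanishes left of its pivot, so its weight is at most `d`, and it is a nonzero permuted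
codeword, so its weight is at least `d`. -/

open Finset Matrix

section Weight

variable {F : Type*} [Zero F] [DecidableEq F] {n : ℕ}

theorem hWt_comp_equiv (v : Fin n → F) (e : Equiv.Perm (Fin n)) : hWt (v ∘ e) = hWt v :=
  card_equiv e fun i => by simp

theorem hWt_le_sub_of_forall_lt {v : Fin n → F} {m : ℕ}
    (hv : ∀ j : Fin n, (j : ℕ) < m → v j = 0) : hWt v ≤ n - m :=
  calc hWt v ≤ #{j : Fin n | ¬ (j : ℕ) < m} :=
        card_le_card fun j => by simpa using mt (hv j)
    _ = n - m := by
        rw [filter_not, card_sdiff_of_subset (filter_subset _ _), Fin.card_filter_val_lt,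
          card_univ, Fintype.card_fin]
        omega

end Weight

theorem exists_perm_apply_mem_iff_of_card_eq {α : Type*} [Fintype α] [DecidableEq α]
    {s t : Finset α} (h : #s = #t) : ∃ σ : Equiv.Perm α, ∀ x, σ x ∈ t ↔ x ∈ s := by
  have hcompl : Fintype.card {x // x ∉ s} = Fintype.card {x // x ∉ t} := by
    simp [Fintype.card_subtype_compl, h]
  refine ⟨Equiv.subtypeCongr (Fintype.equivOfCardEq (by simpa using h))
    (Fintype.equivOfCardEq hcompl), fun x => ?_⟩
  by_cases hx : x ∈ s
  · simp [Equiv.subtypeCongr, hx]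
  · simpa [Equiv.subtypeCongr, hx] using (Fintype.equivOfCardEq hcompl ⟨x, hx⟩).2

theorem exists_perm_apply_symm_eq_zero_of_lt {F : Type*} [Zero F] [DecidableEq F] {n : ℕ}
    (c : Fin n → F) :
    ∃ σ : Equiv.Perm (Fin n), ∀ j : Fin n, (j : ℕ) < n - hWt c → c (σ.symm j) = 0 := by
  have hcard : #{i | c i = 0} = #{j : Fin n | (j : ℕ) < n - hWt c} := by
    have := card_filter_add_card_filter_not (s := univ) fun i => c i = 0
    simp only [hWt, ne_eq, Fin.card_filter_val_lt, card_univ, Fintype.card_fin] at this ⊢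
    omega
  obtain ⟨σ, hσ⟩ := exists_perm_apply_mem_iff_of_card_eq hcard
  exact ⟨σ, fun j hj => by simpa using (hσ (σ.symm j)).1 (by simpa using hj)⟩

section MinDist

variable {F : Type*} [Field F] [DecidableEq F] {n : ℕ} {C : Submodule F (Fin n → F)}

theorem minDist_le_hWt {v : Fin n → F} (hv : v ∈ C) (hv0 : v ≠ 0) : minDist C ≤ hWt v := by
  unfold minDist
  exact Nat.sInf_le ⟨v, hv, hv0, rfl⟩

theorem exists_hWt_eq_minDist (hC : C ≠ ⊥) : ∃ c ∈ C, c ≠ 0 ∧ hWt c = minDist C := by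
  obtain ⟨v, hv, hv0⟩ := C.ne_bot_iff.mp hC
  exact Nat.sInf_mem (s := {d | ∃ c ∈ C, c ≠ 0 ∧ hWt c = d}) ⟨hWt v, v, hv, hv0, rfl⟩

end MinDist

theorem exists_isPivot {F : Type*} [Zero F] {k n : ℕ} {R : Matrix (Fin k) (Fin n) F} {i : Fin k}
    (hi : R i ≠ 0) : ∃ j, IsPivot R i j := by
  obtain ⟨j₀, hj₀⟩ := Function.ne_iff.mp hi
  obtain ⟨j, hj, hmin⟩ := wellFounded_lt.has_min {j | R i j ≠ 0} ⟨j₀, hj₀⟩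
  exact ⟨j, hj, fun j' hj' => by_contra fun h => hmin j' h hj'⟩

namespace IsRREF

variable {F : Type*} [Semiring F] {k n : ℕ} {R : Matrix (Fin k) (Fin n) F}

theorem vecMul_apply_of_isPivot (hR : IsRREF R) {l : Fin k} {j : Fin n} (h : IsPivot R l j)
    (x : Fin k → F) : (x ᵥ* R) j = x l := by
  rw [vecMul, dotProduct, sum_eq_single l (fun i _ hi => by simp [hR.2.2.2 l j h i hi]) (by simp),
    hR.2.1 l j h, mul_one]

theorem exists_row_ne_zero_forall_lt_eq_zero (hR : IsRREF R) {x : Fin k → F} {m : ℕ}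
    (hx0 : x ᵥ* R ≠ 0) (hxm : ∀ j : Fin n, (j : ℕ) < m → (x ᵥ* R) j = 0) :
    ∃ i, R i ≠ 0 ∧ ∀ j : Fin n, (j : ℕ) < m → R i j = 0 := by
  by_contra! h
  have hcoeff : ∀ l, R l ≠ 0 → x l = 0 := fun l hl => by
    obtain ⟨j, hj⟩ := exists_isPivot hl
    obtain ⟨j', hj'm, hj'⟩ := h l hl
    have hjm : (j : ℕ) < m := lt_of_le_of_lt (not_lt.mp fun hlt => hj' (hj.2 j' hlt)) hj'm
    rw [← hR.vecMul_apply_of_isPivot hj x, hxm j hjm]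
  apply hx0
  rw [vecMul_eq_sum]
  refine sum_eq_zero fun l _ => ?_
  by_cases hl : R l = 0 <;> simp [hl, hcoeff]

end IsRREF

theorem mem_span_rows_iff {F : Type*} [Semiring F] {k n : ℕ} (G : Matrix (Fin k) (Fin n) F)
    (v : Fin n → F) :
    v ∈ Submodule.span F (Set.range fun i => G i) ↔ ∃ y, y ᵥ* G = v := by
  simp [Submodule.mem_span_range_iff_exists_fun, vecMul_eq_sum]

theorem exists_perm_rref_row_weight_eq_minDist_general
    {F : Type*} [Field F] [DecidableEq F] {n k : ℕ} (hk : 0 < k)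
    (C : Submodule F (Fin n → F)) (G : Matrix (Fin k) (Fin n) F)
    (hGli : LinearIndependent F (fun i : Fin k => G i))
    (hGspan : Submodule.span F (Set.range fun i : Fin k => G i) = C) :
    ∃ P : Equiv.Perm (Fin n), ∀ R : Matrix (Fin k) (Fin n) F,
      IsRREF R →
      (∃ A : Matrix (Fin k) (Fin k) F, IsUnit A ∧ R = A * (G * P.permMatrix F)) →
      ∃ i : Fin k, hWt (R i) = minDist C := by
  have hC : C ≠ ⊥ := C.ne_bot_iff.mpr
    ⟨G ⟨0, hk⟩, hGspan ▸ Submodule.subset_span ⟨_, rfl⟩, hGli.ne_zero _⟩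
  obtain ⟨c, hcC, hc0, hcd⟩ := exists_hWt_eq_minDist hC
  obtain ⟨σ, hσ⟩ := exists_perm_apply_symm_eq_zero_of_lt c
  refine ⟨σ, fun R hR ⟨A, hA, hRA⟩ => ?_⟩
  obtain ⟨y, rfl⟩ := (mem_span_rows_iff G c).mp (hGspan ▸ hcC)
  obtain ⟨x, hx : x ᵥ* A = y⟩ := vecMul_surjective_iff_isUnit.mpr hA y
  have hxR : x ᵥ* R = (y ᵥ* G) ∘ σ.symm := by
    rw [hRA, ← vecMul_vecMul, hx, ← vecMul_vecMul, vecMul_permMatrix]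
  have hxR0 : x ᵥ* R ≠ 0 := by
    rw [hxR]
    exact fun h => hc0 (funext fun j => by simpa using congrFun h (σ j))
  obtain ⟨i, hi0, hi⟩ := hR.exists_row_ne_zero_forall_lt_eq_zero hxR0 (by simpa [hxR] using hσ)
  have hRi : R i = (A i ᵥ* G) ∘ σ.symm := by
    rw [hRA, mul_apply_eq_vecMul, ← vecMul_vecMul, vecMul_permMatrix]
  have hRiC : A i ᵥ* G ∈ C := hGspan ▸ (mem_span_rows_iff G _).mpr ⟨_, rfl⟩
  refine ⟨i, le_antisymm ?_ ?_⟩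
  · exact (hWt_le_sub_of_forall_lt hi).trans (by omega)
  · rw [hRi, hWt_comp_equiv]
    exact minDist_le_hWt hRiC (fun h => hi0 (by simp [hRi, h]))

/-- For any generator matrix `G` of an `[n,k]_q` linear code `C`,
there is a permutation `P` of the columns such that the reduced row echelon form of
`G·M_P` has a row whose Hamming weight equals the minimum distance of `C`. -/
theorem exists_perm_rref_row_weight_eq_minDist
    {F : Type*} [Field F] [Fintype F] [DecidableEq F] {n k : ℕ} (hk : 0 < k)
    (C : Submodule F (Fin n → F)) (G : Matrix (Fin k) (Fin n) F)
    (hGli : LinearIndependent F (fun i : Fin k => G i))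
    (hGspan : Submodule.span F (Set.range fun i : Fin k => G i) = C) :
    ∃ P : Equiv.Perm (Fin n), ∀ R : Matrix (Fin k) (Fin n) F,
      IsRREF R →
      (∃ A : Matrix (Fin k) (Fin k) F, IsUnit A ∧ R = A * (G * P.permMatrix F)) →
      ∃ i : Fin k, hWt (R i) = minDist C :=
  exists_perm_rref_row_weight_eq_minDist_general hk C G hGli hGspan
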